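/- For every integer k ≥ 2, the complete k-ary tree T(k,2) of height 2 satisfies τ(T(k,2)) = k and β_p(T(k,2)) = k + 1. -/

import Mathlib

open Classical SimpleGraph

noncomputable section

/-- The distance from a vertex to a set of vertices. -/
def setDist {V : Type*} (G : SimpleGraph V) (u : V) (S : Set V) : ℕ :=
  sInf ((G.dist u) '' S)

/-- A locating partition of a graph: a partition of the vertex set such that every
vertex is uniquely determined by its vector of distances to the parts. -/
def IsLocatingPartition {V : Type*} (G : SimpleGraph V) (P : Set (Set V)) : Prop :=
  Setoid.IsPartition P ∧
    ∀ u v : V, (∀ S ∈ P, setDist G u S = setDist G v S) → u = v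

/-- The partition dimension: the minimum cardinality of a locating partition. -/
def partitionDim {V : Type*} (G : SimpleGraph V) : ℕ :=
  sInf {k | ∃ P : Set (Set V), IsLocatingPartition G P ∧ P.ncard = k}

/-- Two vertices are twins if they have the same neighbors other than themselves. -/
def IsTwin {V : Type*} (G : SimpleGraph V) (u v : V) : Prop :=
  G.neighborSet u \ {v} = G.neighborSet v \ {u}

/-- The twin class of a vertex. -/
def twinClass {V : Type*} (G : SimpleGraph V) (u : V) : Set V :=
  {v | IsTwin G u v}

/-- The twin number: the maximum cardinality of a twin class. -/
def twinNumber {V : Type*} (G : SimpleGraph V) : ℕ :=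
  sSup {k | ∃ u : V, (twinClass G u).ncard = k}

/-- The complete `k`-ary tree of height 2: root `none`, children
`some (Sum.inl i)` for `i : Fin k`, and grandchildren `some (Sum.inr (i, j))`,
where `some (Sum.inr (i, j))` is a child of `some (Sum.inl i)`. -/
def karyTree2 (k : ℕ) : SimpleGraph (Option (Fin k ⊕ Fin k × Fin k)) :=
  SimpleGraph.fromRel (fun x y =>
    (x = none ∧ ∃ i : Fin k, y = some (Sum.inl i)) ∨
    (∃ (i : Fin k) (j : Fin k), x = some (Sum.inl i) ∧ y = some (Sum.inr (i, j))))

/-! For `k ≥ 2` the nontrivial twin classes are exactly the `k` families of sibling leaves.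

Sibling leaves are twins, and twins of a connected graph are equidistant from every other
vertex, so they lie in distinct parts of a locating partition. If a locating partition had at most
`k` parts, every family of `k` sibling leaves would meet every part, so every part would contain a
neighbour of every inner vertex `x_i`. Two vertices sharing a part and having a neighbour in every
part have the same distance vector (`0` on their part, `1` elsewhere), so the inner vertices lie in
distinct parts and meet every part too, and then the root coincides with the inner vertex in its
part. Conversely, `{x}` together with the `k` columns `{x_j} ∪ {x_ij : i}` is locating: a vertex is
determined by its column and by the set of columns within distance `1` of it. -/

open Function

section General

variable {V : Type*} {G : SimpleGraph V} {P : Set (Set V)} {S T : Set V} {u v w x : V}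

lemma setDist_le_dist (hw : w ∈ S) : setDist G u S ≤ G.dist u w := Nat.sInf_le ⟨w, hw, rfl⟩

lemma setDist_eq_zero_of_mem (hu : u ∈ S) : setDist G u S = 0 :=
  Nat.eq_zero_of_le_zero ((setDist_le_dist hu).trans_eq G.dist_self)

lemma exists_mem_dist_eq_setDist (hS : S.Nonempty) : ∃ w ∈ S, G.dist u w = setDist G u S :=
  Nat.sInf_mem (hS.image _)

lemma SimpleGraph.Connected.setDist_eq_zero_iff (hG : G.Connected) (hS : S.Nonempty) :
    setDist G u S = 0 ↔ u ∈ S := by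
  refine ⟨fun h => ?_, setDist_eq_zero_of_mem⟩
  obtain ⟨w, hw, hdist⟩ := exists_mem_dist_eq_setDist (G := G) (u := u) hS
  rwa [(hG u w).dist_eq_zero_iff.mp (hdist.trans h)]

lemma SimpleGraph.Connected.setDist_le_one_iff (hG : G.Connected) (hS : S.Nonempty) :
    setDist G u S ≤ 1 ↔ u ∈ S ∨ ∃ x ∈ S, G.Adj u x := by
  constructor
  · intro h
    obtain ⟨w, hw, hdist⟩ := exists_mem_dist_eq_setDist (G := G) (u := u) hS
    obtain h0 | h1 : G.dist u w = 0 ∨ G.dist u w = 1 := by omega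
    · exact .inl ((hG u w).dist_eq_zero_iff.mp h0 ▸ hw)
    · exact .inr ⟨w, hw, dist_eq_one_iff_adj.mp h1⟩
  · rintro (hu | ⟨x, hx, hux⟩)
    · simp [setDist_eq_zero_of_mem hu]
    · exact (setDist_le_dist hx).trans (dist_eq_one_iff_adj.mpr hux).le

lemma SimpleGraph.Connected.setDist_eq_one (hG : G.Connected) (hu : u ∉ S) (hx : x ∈ S)
    (hux : G.Adj u x) : setDist G u S = 1 := by
  have hle := (hG.setDist_le_one_iff ⟨x, hx⟩).mpr (.inr ⟨x, hx, hux⟩)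
  have hne := (hG.setDist_eq_zero_iff (u := u) ⟨x, hx⟩).not.mpr hu
  omega

lemma isTwin_iff_forall_adj_iff :
    IsTwin G u v ↔ ∀ x, x ≠ u → x ≠ v → (G.Adj u x ↔ G.Adj v x) := by
  simp only [IsTwin, Set.ext_iff, Set.mem_sdiff, mem_neighborSet, Set.mem_singleton_iff]
  refine forall_congr' fun x => ?_
  by_cases hxu : x = u <;> by_cases hxv : x = v <;> simp_all

lemma IsTwin.symm (h : IsTwin G u v) : IsTwin G v u := Eq.symm h

lemma IsTwin.dist_le (hG : G.Connected) (h : IsTwin G u v) (hwu : w ≠ u) :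
    G.dist v w ≤ G.dist u w := by
  obtain ⟨p, hp⟩ := (hG u w).exists_walk_length_eq_dist
  cases p with
  | nil => exact absurd rfl hwu
  | @cons _ x _ hux q =>
    rw [← hp, Walk.length_cons]
    by_cases hxv : x = v
    · subst hxv
      exact (SimpleGraph.dist_le q).trans (Nat.le_succ _)
    · have hvx : G.Adj v x := (isTwin_iff_forall_adj_iff.mp h x hux.ne.symm hxv).mp hux
      exact SimpleGraph.dist_le (Walk.cons hvx q)

lemma IsTwin.dist_eq (hG : G.Connected) (h : IsTwin G u v) (hwu : w ≠ u) (hwv : w ≠ v) :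
    G.dist u w = G.dist v w :=
  le_antisymm (h.symm.dist_le hG hwv) (h.dist_le hG hwu)

lemma Setoid.IsPartition.exists_mem_of_ncard_le {ι : Type*} [Finite ι] {f : ι → V}
    (hP : Setoid.IsPartition P) (hPfin : P.Finite)
    (hf : ∀ T ∈ P, ∀ i j, f i ∈ T → f j ∈ T → i = j) (hcard : P.ncard ≤ Nat.card ι) :
    ∀ T ∈ P, ∃ i, f i ∈ T := by
  have := hPfin.to_subtype
  choose part hpart using fun i => (hP.2 (f i)).exists
  let g : ι → P := fun i => ⟨part i, (hpart i).1⟩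
  have hg : Injective g := fun i j hij => by
    have hij' : part i = part j := congrArg Subtype.val hij
    exact hf (part i) (hpart i).1 i j (hpart i).2 (hij' ▸ (hpart j).2)
  intro T hT
  obtain ⟨i, hi⟩ := (hg.bijective_of_nat_card_le (by rwa [Nat.card_coe_set_eq])).2 ⟨T, hT⟩
  have hi' : part i = T := congrArg Subtype.val hi
  exact ⟨i, hi' ▸ (hpart i).2⟩

lemma Function.Surjective.isPartition_range_preimage_singleton {β : Type*} {f : V → β}
    (hf : Surjective f) : Setoid.IsPartition (Set.range fun b => f ⁻¹' {b}) := by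
  refine ⟨fun ⟨b, hb⟩ => ?_, fun u => ⟨f ⁻¹' {f u}, ⟨⟨f u, rfl⟩, rfl⟩, ?_⟩⟩
  · obtain ⟨u, rfl⟩ := hf b
    exact (hb ▸ rfl : u ∈ (∅ : Set V))
  · rintro _ ⟨⟨b, rfl⟩, hb⟩
    rw [Set.mem_preimage, Set.mem_singleton_iff] at hb
    rw [hb]

namespace IsLocatingPartition

lemma eq_of_setDist_eq_of_mem (hP : IsLocatingPartition G P) (hT : T ∈ P) (hu : u ∈ T)
    (hv : v ∈ T) (h : ∀ S ∈ P, u ∉ S → v ∉ S → setDist G u S = setDist G v S) : u = v := by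
  refine hP.2 u v fun S hS => ?_
  by_cases huS : u ∈ S
  · have hvS : v ∈ S := Setoid.eq_of_mem_eqv_class hP.1.2 hT hu hS huS ▸ hv
    rw [setDist_eq_zero_of_mem huS, setDist_eq_zero_of_mem hvS]
  · exact h S hS huS fun hvS => huS (Setoid.eq_of_mem_eqv_class hP.1.2 hT hv hS hvS ▸ hu)

lemma eq_of_isTwin (hG : G.Connected) (hP : IsLocatingPartition G P) (hT : T ∈ P)
    (hu : u ∈ T) (hv : v ∈ T) (h : IsTwin G u v) : u = v :=
  hP.eq_of_setDist_eq_of_mem hT hu hv fun _ _ huS hvS =>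
    congrArg sInf <| Set.image_congr fun _ hw =>
      h.dist_eq hG (ne_of_mem_of_not_mem hw huS) (ne_of_mem_of_not_mem hw hvS)

lemma eq_of_forall_exists_adj (hG : G.Connected) (hP : IsLocatingPartition G P) (hT : T ∈ P)
    (hu : u ∈ T) (hv : v ∈ T) (hadj : ∀ S ∈ P, (∃ x ∈ S, G.Adj u x) ∧ ∃ x ∈ S, G.Adj v x) :
    u = v :=
  hP.eq_of_setDist_eq_of_mem hT hu hv fun S hS huS hvS => by
    obtain ⟨⟨x, hx, hux⟩, y, hy, hvy⟩ := hadj S hS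
    rw [hG.setDist_eq_one huS hx hux, hG.setDist_eq_one hvS hy hvy]

end IsLocatingPartition

end General

section KaryTree

variable {k : ℕ}

@[simp]
lemma karyTree2_adj_none {x : Option (Fin k ⊕ Fin k × Fin k)} :
    (karyTree2 k).Adj none x ↔ ∃ i, x = some (.inl i) := by
  rcases x with _ | t | ⟨t, s⟩ <;> simp [karyTree2]

@[simp]
lemma karyTree2_adj_inl {i : Fin k} {x : Option (Fin k ⊕ Fin k × Fin k)} :
    (karyTree2 k).Adj (some (.inl i)) x ↔ x = none ∨ ∃ j, x = some (.inr (i, j)) := by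
  rcases x with _ | t | ⟨t, s⟩ <;> simp [karyTree2, eq_comm]

@[simp]
lemma karyTree2_adj_inr {i j : Fin k} {x : Option (Fin k ⊕ Fin k × Fin k)} :
    (karyTree2 k).Adj (some (.inr (i, j))) x ↔ x = some (.inl i) := by
  rcases x with _ | t | ⟨t, s⟩ <;> simp [karyTree2, eq_comm]

lemma karyTree2_connected : (karyTree2 k).Connected := by
  refine (connected_iff_exists_forall_reachable _).mpr ⟨none, ?_⟩
  rintro (_ | i | ⟨i, j⟩)
  · rfl
  · exact (karyTree2_adj_none.mpr ⟨i, rfl⟩).reachable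
  · exact (karyTree2_adj_none.mpr ⟨i, rfl⟩).reachable.trans
      (karyTree2_adj_inl.mpr (.inr ⟨j, rfl⟩)).reachable

lemma karyTree2_isTwin_inr (i j j' : Fin k) :
    IsTwin (karyTree2 k) (some (.inr (i, j))) (some (.inr (i, j'))) := by
  rw [isTwin_iff_forall_adj_iff]
  simp

lemma karyTree2_isTwin_iff (hk : 2 ≤ k) {u v : Option (Fin k ⊕ Fin k × Fin k)} :
    IsTwin (karyTree2 k) u v ↔
      u = v ∨ ∃ i j j', u = some (.inr (i, j)) ∧ v = some (.inr (i, j')) := by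
  have : Nontrivial (Fin k) := Fin.nontrivial_iff_two_le.mpr hk
  refine ⟨fun h => ?_, ?_⟩
  · rw [isTwin_iff_forall_adj_iff] at h
    rcases u with _ | i | ⟨i, j⟩ <;> rcases v with _ | t | ⟨t, s⟩
    · exact .inl rfl
    · simpa using h (some (.inr (t, t)))
    · obtain ⟨t', ht'⟩ := exists_ne t
      simpa [ht'] using h (some (.inl t'))
    · simpa using h (some (.inr (i, i)))
    · by_cases hit : i = t
      · exact .inl (hit ▸ rfl)
      · simpa [hit] using h (some (.inr (i, i)))
    · simpa using h none
    · obtain ⟨i', hi'⟩ := exists_ne i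
      simpa [hi'] using h (some (.inl i'))
    · simpa using h none
    · by_cases hit : i = t
      · exact .inr ⟨i, j, s, rfl, hit ▸ rfl⟩
      · simpa [hit] using h (some (.inl i))
  · rintro (rfl | ⟨i, j, j', rfl, rfl⟩)
    · exact rfl
    · exact karyTree2_isTwin_inr i j j'

lemma karyTree2_isGreatest_twinClass_ncard (hk : 2 ≤ k) :
    IsGreatest {n | ∃ u, (twinClass (karyTree2 k) u).ncard = n} k := by
  have hinr : ∀ i j : Fin k,
      twinClass (karyTree2 k) (some (.inr (i, j))) = Set.range fun j' => some (.inr (i, j')) := by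
    intro i j
    ext v
    simp only [twinClass, karyTree2_isTwin_iff hk, Set.mem_ofPred_eq, Set.mem_range]
    aesop
  have hsingleton : ∀ u : Option (Fin k ⊕ Fin k × Fin k), (∀ i j, u ≠ some (.inr (i, j))) →
      twinClass (karyTree2 k) u = {u} := by
    intro u hu
    ext v
    simp [twinClass, karyTree2_isTwin_iff hk, eq_comm, hu]
  have hinr_ncard : ∀ i j : Fin k, (twinClass (karyTree2 k) (some (.inr (i, j)))).ncard = k := by
    intro i j
    rw [hinr, Set.ncard_range_of_injective (fun _ _ h => by simpa using h), Nat.card_fin]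
  refine ⟨⟨_, hinr_ncard ⟨0, by omega⟩ ⟨0, by omega⟩⟩, ?_⟩
  rintro _ ⟨_ | i | ⟨i, j⟩, rfl⟩
  · rw [hsingleton _ (by simp), Set.ncard_singleton]; omega
  · rw [hsingleton _ (by simp), Set.ncard_singleton]; omega
  · exact (hinr_ncard i j).le

lemma karyTree2_le_ncard_of_isLocatingPartition {P : Set (Set (Option (Fin k ⊕ Fin k × Fin k)))}
    (hP : IsLocatingPartition (karyTree2 k) P) : k + 1 ≤ P.ncard := by
  by_contra! hlt
  have hcard : P.ncard ≤ Nat.card (Fin k) := by rw [Nat.card_fin]; omega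
  have hPfin : P.Finite := Set.toFinite P
  have leaf_mem : ∀ i, ∀ S ∈ P, ∃ j, some (.inr (i, j)) ∈ S := fun i =>
    hP.1.exists_mem_of_ncard_le hPfin (fun T hT j j' hj hj' => by
      simpa using hP.eq_of_isTwin karyTree2_connected hT hj hj' (karyTree2_isTwin_inr i j j'))
      hcard
  have inl_adj : ∀ i, ∀ S ∈ P, ∃ x ∈ S, (karyTree2 k).Adj (some (.inl i)) x := fun i S hS =>
    let ⟨j, hj⟩ := leaf_mem i S hS
    ⟨_, hj, by simp⟩
  have inl_mem : ∀ S ∈ P, ∃ i, some (.inl i) ∈ S :=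
    hP.1.exists_mem_of_ncard_le hPfin (fun T hT i i' hi hi' => by
      simpa using hP.eq_of_forall_exists_adj karyTree2_connected hT hi hi'
        fun S hS => ⟨inl_adj i S hS, inl_adj i' S hS⟩) hcard
  obtain ⟨T, ⟨hT, hroot⟩, -⟩ := hP.1.2 none
  obtain ⟨i, hi⟩ := inl_mem T hT
  have := hP.eq_of_forall_exists_adj karyTree2_connected hT hroot hi fun S hS =>
    ⟨let ⟨i', hi'⟩ := inl_mem S hS; ⟨_, hi', by simp⟩, inl_adj i S hS⟩
  simp at this

def karyTree2Column : Option (Fin k ⊕ Fin k × Fin k) → Option (Fin k)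
  | none => none
  | some (.inl j) => some j
  | some (.inr (_, j)) => some j

lemma karyTree2Column_surjective : Surjective (karyTree2Column (k := k)) := by
  rintro (_ | j)
  exacts [⟨none, rfl⟩, ⟨some (.inl j), rfl⟩]

lemma karyTree2_isLocatingPartition_column :
    IsLocatingPartition (karyTree2 k) (Set.range fun c => karyTree2Column ⁻¹' {c}) := by
  refine ⟨karyTree2Column_surjective.isPartition_range_preimage_singleton, fun u v h => ?_⟩
  have hne : ∀ c, (karyTree2Column (k := k) ⁻¹' {c}).Nonempty := fun c =>
    (Set.singleton_nonempty c).preimage karyTree2Column_surjective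
  have hcol : ∀ c, karyTree2Column u = c ↔ karyTree2Column v = c := fun c => by
    have hu := karyTree2_connected.setDist_eq_zero_iff (u := u) (hne c)
    have hv := karyTree2_connected.setDist_eq_zero_iff (u := v) (hne c)
    simp only [Set.mem_preimage, Set.mem_singleton_iff] at hu hv
    rw [← hu, ← hv, h _ ⟨c, rfl⟩]
  have hball : ∀ c, (karyTree2Column u = c ∨ ∃ x, karyTree2Column x = c ∧ (karyTree2 k).Adj u x) ↔
      (karyTree2Column v = c ∨ ∃ x, karyTree2Column x = c ∧ (karyTree2 k).Adj v x) := fun c => by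
    have hu := karyTree2_connected.setDist_le_one_iff (u := u) (hne c)
    have hv := karyTree2_connected.setDist_le_one_iff (u := v) (hne c)
    simp only [Set.mem_preimage, Set.mem_singleton_iff] at hu hv
    rw [← hu, ← hv, h _ ⟨c, rfl⟩]
  -- Columns within distance 1: all of them for the root and for `x_i`, only `i`, `j` for `x_ij`.
  rcases u with _ | i | ⟨i, j⟩ <;> rcases v with _ | t | ⟨t, s⟩
  · rfl
  · simpa [karyTree2Column] using hcol none
  · simpa [karyTree2Column] using hcol none
  · simpa [karyTree2Column] using hcol none
  · simpa [karyTree2Column, eq_comm] using hcol (some i)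
  · simpa [karyTree2Column] using (hball none).mp (.inr ⟨none, rfl, by simp⟩)
  · simpa [karyTree2Column] using hcol none
  · simpa [karyTree2Column] using (hball none).mpr (.inr ⟨none, rfl, by simp⟩)
  · obtain rfl : s = j := by simpa [karyTree2Column] using (hcol (some j)).mp rfl
    have hi := (hball (some i)).mp (.inr ⟨some (.inl i), rfl, by simp⟩)
    have ht := (hball (some t)).mpr (.inr ⟨some (.inl t), rfl, by simp⟩)
    simp only [karyTree2Column, Option.some.injEq, karyTree2_adj_inr, exists_eq_right] at hi ht
    obtain rfl : i = t := by omega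
    rfl

lemma karyTree2_isLeast_locatingPartition_ncard :
    IsLeast {n | ∃ P, IsLocatingPartition (karyTree2 k) P ∧ P.ncard = n} (k + 1) := by
  refine ⟨⟨_, karyTree2_isLocatingPartition_column, ?_⟩, ?_⟩
  · have hinj : Injective fun c => karyTree2Column (k := k) ⁻¹' {c} :=
      (Set.preimage_injective.mpr karyTree2Column_surjective).comp Set.singleton_injective
    rw [Set.ncard_range_of_injective hinj, Nat.card_eq_fintype_card, Fintype.card_option,
      Fintype.card_fin]
  · rintro _ ⟨P, hP, rfl⟩
    exact karyTree2_le_ncard_of_isLocatingPartition hP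

end KaryTree

/-- For every `k ≥ 2`, the complete `k`-ary tree of height 2 has twin number `k`
and partition dimension `k + 1`. -/
theorem karyTree2_twinNumber_partitionDim (k : ℕ) (hk : 2 ≤ k) :
    twinNumber (karyTree2 k) = k ∧ partitionDim (karyTree2 k) = k + 1 :=
  ⟨(karyTree2_isGreatest_twinClass_ncard hk).csSup_eq,
    karyTree2_isLeast_locatingPartition_ncard.csInf_eq⟩
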